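/- arXiv:2201.07930 — 2 statements merged into one kernel-verified Lean document; each statement's English description precedes it below -/
import Mathlib

section
/- Uniqueness in the discrete-time stochastic representation problem under a nonlinear expectation: if L¹ = (L¹_t)_{t=0,...,N} and L² = (L²_t)_{t=0,...,N} are both adapted processes such that, for every t ∈ {0,...,N} and i = 1,2, the random variable Σ_{u=t}^{N} f(u, max_{t≤v≤u} L^i_v) is square-integrable and X_t = E_t[Σ_{u=t}^{N} f(u, max_{t≤v≤u} L^i_v)] a.s., then L¹_t = L²_t a.s. for every t ∈ {0,...,N}. -/
open MeasureTheory Filter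

/-- Running maximum `max_{t ≤ v ≤ u} L v ω` (intended for `t ≤ u`). -/
noncomputable def runMax {Ω : Type*} (L : ℕ → Ω → ℝ) (t u : ℕ) (ω : Ω) : ℝ :=
  (Finset.Icc t u).fold max (L t ω) fun v => L v ω

/-- Running minimum `min_{t ≤ v ≤ u} K v ω` (intended for `t ≤ u`). -/
noncomputable def runMin {Ω : Type*} (K : ℕ → Ω → ℝ) (t u : ℕ) (ω : Ω) : ℝ :=
  (Finset.Icc t u).fold min (K t ω) fun v => K v ω

/-- A discrete-time nonlinear expectation on the horizon `{0, ..., N}`: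
a family of maps `E t` sending square-integrable `F N`-measurable random
variables to square-integrable `F t`-measurable random variables, satisfying
monotonicity, strict monotonicity, translation invariance, the tower property,
the zero-one law and monotone convergence. -/
structure NLExp {Ω : Type*} {m0 : MeasurableSpace Ω} (μ : Measure Ω)
    (F : Filtration ℕ m0) (N : ℕ) where
  E : ℕ → (Ω → ℝ) → Ω → ℝ
  adapted : ∀ t, t ≤ N → ∀ ξ : Ω → ℝ, StronglyMeasurable[F N] ξ → MemLp ξ 2 μ →
    StronglyMeasurable[F t] (E t ξ)
  sqInt : ∀ t, t ≤ N → ∀ ξ : Ω → ℝ, StronglyMeasurable[F N] ξ → MemLp ξ 2 μ →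
    MemLp (E t ξ) 2 μ
  mono : ∀ t, t ≤ N → ∀ ξ η : Ω → ℝ, StronglyMeasurable[F N] ξ → MemLp ξ 2 μ →
    StronglyMeasurable[F N] η → MemLp η 2 μ → ξ ≤ᵐ[μ] η → E t ξ ≤ᵐ[μ] E t η
  strictMono : ∀ t, t ≤ N → ∀ ξ η : Ω → ℝ, StronglyMeasurable[F N] ξ → MemLp ξ 2 μ →
    StronglyMeasurable[F N] η → MemLp η 2 μ → ξ ≤ᵐ[μ] η →
    0 < μ {ω | ξ ω < η ω} → 0 < μ {ω | E t ξ ω < E t η ω}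
  translation : ∀ t, t ≤ N → ∀ ξ ζ : Ω → ℝ, StronglyMeasurable[F N] ξ → MemLp ξ 2 μ →
    StronglyMeasurable[F t] ζ → MemLp ζ 2 μ → E t (ξ + ζ) =ᵐ[μ] E t ξ + ζ
  tower : ∀ s t, s ≤ t → t ≤ N → ∀ ξ : Ω → ℝ, StronglyMeasurable[F N] ξ → MemLp ξ 2 μ →
    E s (E t ξ) =ᵐ[μ] E s ξ
  zeroOne : ∀ t, t ≤ N → ∀ ξ η : Ω → ℝ, StronglyMeasurable[F N] ξ → MemLp ξ 2 μ →
    StronglyMeasurable[F N] η → MemLp η 2 μ → ∀ A : Set Ω, MeasurableSet[F t] A →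
    E t (A.indicator ξ + Aᶜ.indicator η) =ᵐ[μ]
      A.indicator (E t ξ) + Aᶜ.indicator (E t η)
  monoConv : ∀ t, t ≤ N → ∀ (ξs : ℕ → Ω → ℝ) (ξ : Ω → ℝ),
    (∀ n, StronglyMeasurable[F N] (ξs n)) → (∀ n, MemLp (ξs n) 2 μ) →
    StronglyMeasurable[F N] ξ → MemLp ξ 2 μ →
    (∀ᵐ ω ∂μ, (Monotone fun n => ξs n ω) ∨ (Antitone fun n => ξs n ω)) →
    (∀ᵐ ω ∂μ, Tendsto (fun n => ξs n ω) atTop (nhds (ξ ω))) →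
    ∀ᵐ ω ∂μ, Tendsto (fun n => E t (ξs n) ω) atTop (nhds (E t ξ ω))


/-!
Argue by backward induction on `t`. Suppose `L₁ v = L₂ v` a.s. for all `v > t` and let
`A = {L₂ t < L₁ t} ∈ F t`. Since `f` is strictly decreasing, on `A` the payoff of `L₁` is strictly
smaller than that of `L₂`. Pasting the two payoffs along `A` gives a variable dominated by the
payoff of `L₂`, strictly on `A`; by the zero-one law its expectation at time `t` still equals
`X t`, so strict monotonicity forces `μ A = 0`. Exchanging `L₁` and `L₂` gives equality.
-/

section RunMax

variable {Ω : Type*}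

lemma runMax_self (L : ℕ → Ω → ℝ) (t : ℕ) (ω : Ω) : runMax L t t ω = L t ω := by
  simp [runMax]

lemma runMax_mono {K L : ℕ → Ω → ℝ} {t u : ℕ} {ω : Ω} (htu : t ≤ u)
    (h : ∀ v ∈ Finset.Icc t u, K v ω ≤ L v ω) : runMax K t u ω ≤ runMax L t u ω := by
  have ht : t ∈ Finset.Icc t u := Finset.mem_Icc.2 ⟨le_rfl, htu⟩
  have le_runMax : ∀ v ∈ Finset.Icc t u, L v ω ≤ runMax L t u ω := fun v hv =>
    (Finset.le_fold_max _).2 (Or.inr ⟨v, hv, le_rfl⟩)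
  exact (Finset.fold_max_le _).2
    ⟨(h t ht).trans (le_runMax t ht), fun v hv => (h v hv).trans (le_runMax v hv)⟩

lemma MeasureTheory.StronglyMeasurable.finset_fold_max {ι : Type*} {m : MeasurableSpace Ω}
    (s : Finset ι) {b : Ω → ℝ} {g : ι → Ω → ℝ} (hb : StronglyMeasurable[m] b)
    (hg : ∀ i ∈ s, StronglyMeasurable[m] (g i)) :
    StronglyMeasurable[m] fun ω => s.fold max (b ω) fun i => g i ω := by
  classical
  induction s using Finset.induction_on with
  | empty => simpa using hb
  | insert i s hi ih =>
    simp only [Finset.fold_insert hi]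
    exact (hg i (Finset.mem_insert_self i s)).sup
      (ih fun j hj => hg j (Finset.mem_insert_of_mem hj))

lemma MeasureTheory.StronglyMeasurable.runMax {m : MeasurableSpace Ω} {L : ℕ → Ω → ℝ} {t u : ℕ}
    (htu : t ≤ u) (hL : ∀ v ∈ Finset.Icc t u, StronglyMeasurable[m] (L v)) :
    StronglyMeasurable[m] (runMax L t u) :=
  StronglyMeasurable.finset_fold_max _ (hL t (Finset.mem_Icc.2 ⟨le_rfl, htu⟩)) hL

end RunMax

lemma stronglyMeasurable_apply_of_continuous {Ω : Type*} {m : MeasurableSpace Ω}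
    {f : Ω → ℝ → ℝ} (hc : ∀ ω, Continuous (f ω)) (hm : ∀ l, StronglyMeasurable[m] fun ω => f ω l)
    {g : Ω → ℝ} (hg : StronglyMeasurable[m] g) :
    StronglyMeasurable[m] fun ω => f ω (g ω) :=
  (stronglyMeasurable_uncurry_of_continuous_of_stronglyMeasurable (u := fun l ω => f ω l) hc
    hm).comp_measurable (hg.measurable.prodMk measurable_id)

section RunMaxPayoff

variable {Ω : Type*} {m0 : MeasurableSpace Ω} {μ : Measure Ω} {F : Filtration ℕ m0} {N : ℕ}
  {f : Ω → ℕ → ℝ → ℝ}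

noncomputable def runMaxPayoff (f : Ω → ℕ → ℝ → ℝ) (L : ℕ → Ω → ℝ) (t N : ℕ) (ω : Ω) : ℝ :=
  ∑ u ∈ Finset.Icc t N, f ω u (runMax L t u ω)

lemma stronglyMeasurable_runMaxPayoff (hf_cont : ∀ ω, ∀ u, u ≤ N → Continuous (f ω u))
    (hf_adapted : ∀ u, u ≤ N → ∀ l : ℝ, StronglyMeasurable[F u] fun ω => f ω u l)
    {L : ℕ → Ω → ℝ} (hL : ∀ v, v ≤ N → StronglyMeasurable[F v] (L v)) (t : ℕ) :
    StronglyMeasurable[F N] (runMaxPayoff f L t N) := by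
  refine Finset.stronglyMeasurable_fun_sum _ fun u hu => ?_
  obtain ⟨htu, huN⟩ := Finset.mem_Icc.1 hu
  refine stronglyMeasurable_apply_of_continuous (fun ω => hf_cont ω u huN)
    (fun l => (hf_adapted u huN l).mono (F.mono huN)) (StronglyMeasurable.runMax htu ?_)
  intro v hv
  have hvN : v ≤ N := (Finset.mem_Icc.1 hv).2.trans huN
  exact (hL v hvN).mono (F.mono hvN)

lemma runMaxPayoff_lt_of_le_of_lt {ω : Ω} (hf_anti : ∀ u, u ≤ N → StrictAnti (f ω u))
    {K L : ℕ → Ω → ℝ} {t : ℕ} (ht : t ≤ N) (hle : ∀ v ∈ Finset.Icc t N, K v ω ≤ L v ω)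
    (hlt : K t ω < L t ω) :
    runMaxPayoff f L t N ω < runMaxPayoff f K t N ω := by
  refine Finset.sum_lt_sum (fun u hu => ?_) ⟨t, Finset.mem_Icc.2 ⟨le_rfl, ht⟩, ?_⟩
  · obtain ⟨htu, huN⟩ := Finset.mem_Icc.1 hu
    exact (hf_anti u huN).antitone <| runMax_mono htu fun v hv =>
      hle v (Finset.Icc_subset_Icc_right huN hv)
  · simpa only [runMax_self] using hf_anti t ht hlt

end RunMaxPayoff

namespace NLExp

variable {Ω : Type*} {m0 : MeasurableSpace Ω} {μ : Measure Ω} {F : Filtration ℕ m0} {N : ℕ}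
  (EE : NLExp μ F N)

lemma measure_eq_zero_of_E_ae_eq {t : ℕ} (ht : t ≤ N) {ξ η : Ω → ℝ}
    (hξ : StronglyMeasurable[F N] ξ) (hξ2 : MemLp ξ 2 μ)
    (hη : StronglyMeasurable[F N] η) (hη2 : MemLp η 2 μ) (hE : EE.E t ξ =ᵐ[μ] EE.E t η)
    {A : Set Ω} (hA : MeasurableSet[F t] A) (hlt : ∀ᵐ ω ∂μ, ω ∈ A → ξ ω < η ω) : μ A = 0 := by
  set ζ := A.indicator ξ + Aᶜ.indicator η with hζ
  have hζ_of_mem : ∀ ω ∈ A, ζ ω = ξ ω := fun ω hω => by simp [hζ, hω]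
  have hζ_of_notMem : ∀ ω ∉ A, ζ ω = η ω := fun ω hω => by simp [hζ, hω]
  have hζ_le : ζ ≤ᵐ[μ] η := by
    filter_upwards [hlt] with ω hω
    by_cases hωA : ω ∈ A
    · exact (hζ_of_mem ω hωA).trans_le (hω hωA).le
    · exact (hζ_of_notMem ω hωA).le
  have hA_le : μ A ≤ μ {ω | ζ ω < η ω} := measure_mono_ae <| by
    filter_upwards [hlt] with ω hω hωA
    exact (hζ_of_mem ω hωA).trans_lt (hω hωA)
  have hEζ : EE.E t ζ =ᵐ[μ] EE.E t η := by
    filter_upwards [EE.zeroOne t ht ξ η hξ hξ2 hη hη2 A hA, hE] with ω hζω hω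
    rw [hζ, hζω]
    by_cases hωA : ω ∈ A <;> simp [hωA, hω]
  have hA_FN : MeasurableSet[F N] A := F.mono ht _ hA
  have hA_m0 : MeasurableSet A := F.le t _ hA
  by_contra hA0
  have hEζ_lt : 0 < μ {ω | EE.E t ζ ω < EE.E t η ω} :=
    EE.strictMono t ht ζ η ((hξ.indicator hA_FN).add (hη.indicator hA_FN.compl))
      ((hξ2.indicator hA_m0).add (hη2.indicator hA_m0.compl)) hη hη2 hζ_le
      (hA_le.trans_lt' (pos_iff_ne_zero.2 hA0))
  exact hEζ_lt.ne' (measure_mono_null (fun ω hω => ne_of_lt hω) (ae_iff.1 hEζ))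

lemma ae_le_of_E_runMaxPayoff_ae_eq {f : Ω → ℕ → ℝ → ℝ}
    (hf_cont : ∀ ω, ∀ u, u ≤ N → Continuous (f ω u))
    (hf_anti : ∀ ω, ∀ u, u ≤ N → StrictAnti (f ω u))
    (hf_adapted : ∀ u, u ≤ N → ∀ l : ℝ, StronglyMeasurable[F u] fun ω => f ω u l)
    {L₁ L₂ : ℕ → Ω → ℝ} (hL₁ : ∀ v, v ≤ N → StronglyMeasurable[F v] (L₁ v))
    (hL₂ : ∀ v, v ≤ N → StronglyMeasurable[F v] (L₂ v)) {t : ℕ} (ht : t ≤ N)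
    (hL₁2 : MemLp (runMaxPayoff f L₁ t N) 2 μ) (hL₂2 : MemLp (runMaxPayoff f L₂ t N) 2 μ)
    (hE : EE.E t (runMaxPayoff f L₁ t N) =ᵐ[μ] EE.E t (runMaxPayoff f L₂ t N))
    (hlater : ∀ v, t < v → v ≤ N → L₁ v =ᵐ[μ] L₂ v) :
    ∀ᵐ ω ∂μ, L₁ t ω ≤ L₂ t ω := by
  have hA : MeasurableSet[F t] {ω | L₂ t ω < L₁ t ω} :=
    measurableSet_lt (hL₂ t ht).measurable (hL₁ t ht).measurable
  have hlt : ∀ᵐ ω ∂μ, L₂ t ω < L₁ t ω →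
      runMaxPayoff f L₁ t N ω < runMaxPayoff f L₂ t N ω := by
    have hlater_ae : ∀ᵐ ω ∂μ, ∀ v ∈ Finset.Ioc t N, L₁ v ω = L₂ v ω :=
      (eventually_all_finset _).2 fun v hv =>
        hlater v (Finset.mem_Ioc.1 hv).1 (Finset.mem_Ioc.1 hv).2
    filter_upwards [hlater_ae] with ω hω hωt
    refine runMaxPayoff_lt_of_le_of_lt (hf_anti ω) ht (fun v hv => ?_) hωt
    rcases (Finset.mem_Icc.1 hv).1.eq_or_lt with rfl | htv
    · exact hωt.le
    · exact (hω v (Finset.mem_Ioc.2 ⟨htv, (Finset.mem_Icc.1 hv).2⟩)).ge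
  have hA0 := EE.measure_eq_zero_of_E_ae_eq ht
    (stronglyMeasurable_runMaxPayoff hf_cont hf_adapted hL₁ t) hL₁2
    (stronglyMeasurable_runMaxPayoff hf_cont hf_adapted hL₂ t) hL₂2 hE hA hlt
  simpa [ae_iff, not_le] using hA0

end NLExp

theorem stochastic_representation_uniqueness_general
    {Ω : Type*}
    [m0 : MeasurableSpace Ω]
    (μ : Measure Ω)
    (F : Filtration ℕ m0) (N : ℕ)
    (EE : NLExp μ F N)
    (f : Ω → ℕ → ℝ → ℝ)
    (hf_cont : ∀ ω, ∀ t, t ≤ N → Continuous (f ω t))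
    (hf_anti : ∀ ω, ∀ t, t ≤ N → StrictAnti (f ω t))
    (hf_adapted : ∀ t, t ≤ N → ∀ l : ℝ, StronglyMeasurable[F t] fun ω => f ω t l)
    (X : ℕ → Ω → ℝ)
    (L₁ L₂ : ℕ → Ω → ℝ)
    (hL₁_adapted : ∀ t, t ≤ N → StronglyMeasurable[F t] (L₁ t))
    (hL₂_adapted : ∀ t, t ≤ N → StronglyMeasurable[F t] (L₂ t))
    (hL₁_sqInt : ∀ t, t ≤ N →
      MemLp (fun ω => ∑ u ∈ Finset.Icc t N, f ω u (runMax L₁ t u ω)) 2 μ)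
    (hL₂_sqInt : ∀ t, t ≤ N →
      MemLp (fun ω => ∑ u ∈ Finset.Icc t N, f ω u (runMax L₂ t u ω)) 2 μ)
    (hL₁_rep : ∀ t, t ≤ N →
      X t =ᵐ[μ] EE.E t fun ω => ∑ u ∈ Finset.Icc t N, f ω u (runMax L₁ t u ω))
    (hL₂_rep : ∀ t, t ≤ N →
      X t =ᵐ[μ] EE.E t fun ω => ∑ u ∈ Finset.Icc t N, f ω u (runMax L₂ t u ω)) :
    ∀ t, t ≤ N → L₁ t =ᵐ[μ] L₂ t := by
  intro t
  induction t using Nat.strong_decreasing_induction with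
  | base => exact ⟨N, fun v hv hvN => absurd hvN (not_le.2 hv)⟩
  | step t hlater =>
    intro ht
    have hE := (hL₁_rep t ht).symm.trans (hL₂_rep t ht)
    filter_upwards [EE.ae_le_of_E_runMaxPayoff_ae_eq hf_cont hf_anti hf_adapted hL₁_adapted
        hL₂_adapted ht (hL₁_sqInt t ht) (hL₂_sqInt t ht) hE hlater,
      EE.ae_le_of_E_runMaxPayoff_ae_eq hf_cont hf_anti hf_adapted hL₂_adapted hL₁_adapted ht
        (hL₂_sqInt t ht) (hL₁_sqInt t ht) hE.symm fun v hv hvN => (hlater v hv hvN).symm]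
      with ω h₁₂ h₂₁
    exact le_antisymm h₁₂ h₂₁

/-- **Uniqueness in the discrete-time stochastic representation problem under a
nonlinear expectation.** If `L₁` and `L₂` are both adapted processes such that, for
every `t ∈ {0,...,N}`, the random variable `∑_{u=t}^{N} f(u, max_{t≤v≤u} Lⁱ_v)` is
square-integrable and `X t = E t [∑_{u=t}^{N} f(u, max_{t≤v≤u} Lⁱ_v)]` a.s., then
`L₁ t = L₂ t` a.s. for every `t ∈ {0,...,N}`. -/
theorem stochastic_representation_uniqueness
    {Ω : Type*} [TopologicalSpace Ω] [PolishSpace Ω]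
    [m0 : MeasurableSpace Ω] [BorelSpace Ω]
    (μ : Measure Ω) [IsProbabilityMeasure μ]
    (F : Filtration ℕ m0) (N : ℕ) (hN : 1 ≤ N)
    (EE : NLExp μ F N)
    (f : Ω → ℕ → ℝ → ℝ)
    (hf_cont : ∀ ω, ∀ t, t ≤ N → Continuous (f ω t))
    (hf_anti : ∀ ω, ∀ t, t ≤ N → StrictAnti (f ω t))
    (hf_top : ∀ ω, ∀ t, t ≤ N → Tendsto (f ω t) atBot atTop)
    (hf_bot : ∀ ω, ∀ t, t ≤ N → Tendsto (f ω t) atTop atBot)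
    (hf_adapted : ∀ t, t ≤ N → ∀ l : ℝ, StronglyMeasurable[F t] fun ω => f ω t l)
    (hf_sqInt : ∀ t, t ≤ N → ∀ l : ℝ, MemLp (fun ω => f ω t l) 2 μ)
    (X : ℕ → Ω → ℝ)
    (hX_adapted : ∀ t, t ≤ N → StronglyMeasurable[F t] (X t))
    (hX_sqInt : ∀ t, t ≤ N → MemLp (X t) 2 μ)
    (L₁ L₂ : ℕ → Ω → ℝ)
    (hL₁_adapted : ∀ t, t ≤ N → StronglyMeasurable[F t] (L₁ t))
    (hL₂_adapted : ∀ t, t ≤ N → StronglyMeasurable[F t] (L₂ t))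
    (hL₁_sqInt : ∀ t, t ≤ N →
      MemLp (fun ω => ∑ u ∈ Finset.Icc t N, f ω u (runMax L₁ t u ω)) 2 μ)
    (hL₂_sqInt : ∀ t, t ≤ N →
      MemLp (fun ω => ∑ u ∈ Finset.Icc t N, f ω u (runMax L₂ t u ω)) 2 μ)
    (hL₁_rep : ∀ t, t ≤ N →
      X t =ᵐ[μ] EE.E t fun ω => ∑ u ∈ Finset.Icc t N, f ω u (runMax L₁ t u ω))
    (hL₂_rep : ∀ t, t ≤ N →
      X t =ᵐ[μ] EE.E t fun ω => ∑ u ∈ Finset.Icc t N, f ω u (runMax L₂ t u ω)) :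
    ∀ t, t ≤ N → L₁ t =ᵐ[μ] L₂ t :=
  stochastic_representation_uniqueness_general (m0 := m0) μ F N EE f hf_cont hf_anti hf_adapted X L₁
    L₂ hL₁_adapted hL₂_adapted hL₁_sqInt hL₂_sqInt hL₁_rep hL₂_rep
end

section
/- Lower bound property of the representation solution: let L = (L_t)_{t=0,...,N} be a solution of the stochastic representation problem for X. Then for every stopping time σ ∈ T_{0,N-1} and every τ ∈ T_σ, L_σ ≤ l_{σ,τ} a.s. -/
open MeasureTheory Filter

/-!
Suppose `l < L_t` on a non-null event `B ⊆ {σ = t}` of `F_t`, and restart at the stopping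
time `T = max τ (t + 1)`, which is `τ` on `B`. The running maximum from `t` dominates both
`L_t > l` and the running maximum from `T`, so, `f` being strictly decreasing, on `B`
`∑_{u=t}^N f(u, max_{t≤v≤u} L_v) < Θ := ∑_{u=T}^N f(u, max_{T≤v≤u} L_v) + ∑_{u=t}^{T-1} f(u, l)`.
The tower property at `T` and translation invariance give
`E_t[Θ] = E_t[X_T + ∑_{u=t}^{T-1} f(u, l)]`, which is `X_t` on `B` by the equation defining `l`.
So both variables have `E_t`-value `X_t` on `B`, contradicting strict monotonicity.
-/

section RunningMaximum

variable {Ω : Type*} {L : ℕ → Ω → ℝ}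

theorem le_runMax {t u v : ℕ} (htv : t ≤ v) (hvu : v ≤ u) (ω : Ω) :
    L v ω ≤ runMax L t u ω :=
  (Finset.le_fold_max _).2 (Or.inr ⟨v, Finset.mem_Icc.2 ⟨htv, hvu⟩, le_rfl⟩)

theorem runMax_le_runMax {t s u : ℕ} (hts : t ≤ s) (hsu : s ≤ u) (ω : Ω) :
    runMax L s u ω ≤ runMax L t u ω := by
  refine (Finset.fold_max_le _).2 ⟨le_runMax hts hsu ω, fun v hv => ?_⟩
  obtain ⟨hsv, hvu⟩ := Finset.mem_Icc.1 hv
  exact le_runMax (hts.trans hsv) hvu ω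

theorem measurable_runMax {m : MeasurableSpace Ω} {t u : ℕ}
    (hL : ∀ v ≤ u, Measurable[m] (L v)) (htu : t ≤ u) : Measurable[m] (runMax L t u) := by
  suffices ∀ s ⊆ Finset.Icc t u, Measurable[m] fun ω => s.fold max (L t ω) fun v => L v ω from
    this _ subset_rfl
  intro s
  induction s using Finset.induction with
  | empty => exact fun _ => by simpa using hL t htu
  | insert v s hv ih =>
    intro hs
    simp only [Finset.fold_insert hv]
    exact (hL v (Finset.mem_Icc.1 (hs (Finset.mem_insert_self v s))).2).max
      (ih ((Finset.subset_insert v s).trans hs))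

end RunningMaximum

theorem stronglyMeasurable_comp_of_caratheodory {Ω : Type*} {m : MeasurableSpace Ω}
    {f : Ω → ℝ → ℝ} (hf_meas : ∀ r, StronglyMeasurable[m] fun ω => f ω r)
    (hf_cont : ∀ ω, Continuous (f ω)) {g : Ω → ℝ} (hg : Measurable[m] g) :
    StronglyMeasurable[m] fun ω => f ω (g ω) :=
  (@stronglyMeasurable_uncurry_of_continuous_of_stronglyMeasurable Ω ℝ ℝ _ _ _ _ _ _ _ m
    (fun r ω => f ω r) hf_cont hf_meas).comp_measurable (hg.prodMk (@measurable_id Ω m))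

section StoppedValues

variable {Ω : Type*} {N : ℕ} {T : Ω → ℕ}

theorem stopped_eq_sum_indicator {E : Type*} [AddCommMonoid E] (G : ℕ → Ω → E)
    (hTN : ∀ ω, T ω ≤ N) :
    (fun ω => G (T ω) ω) =
      ∑ s ∈ Finset.range (N + 1), ({ω | T ω = s}.indicator (G s) : Ω → E) := by
  funext ω
  rw [Finset.sum_apply, Finset.sum_eq_single (T ω)]
  · simp
  · exact fun s _ hs => Set.indicator_of_notMem (fun h => hs h.symm) _
  · exact fun h => absurd (Finset.mem_range.2 (Nat.lt_succ_of_le (hTN ω))) h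

theorem ae_stopped_of_forall {m : MeasurableSpace Ω} {μ : Measure Ω} {P : ℕ → Ω → Prop}
    (hTN : ∀ ω, T ω ≤ N) (hP : ∀ s ≤ N, ∀ᵐ ω ∂μ, T ω = s → P s ω) :
    ∀ᵐ ω ∂μ, P (T ω) ω := by
  have hall : ∀ᵐ ω ∂μ, ∀ s, s ≤ N → T ω = s → P s ω :=
    ae_all_iff.2 fun s => (em (s ≤ N)).elim (fun hs => (hP s hs).mono fun _ h _ => h)
      (fun hs => .of_forall fun _ h => absurd h hs)
  filter_upwards [hall] with ω hω using hω _ (hTN ω) rfl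

variable {m0 : MeasurableSpace Ω} {F : Filtration ℕ m0}

theorem MeasureTheory.IsStoppingTime.measurableSet_eq_nat
    (hT : IsStoppingTime F fun ω => (T ω : WithTop ℕ)) (s : ℕ) :
    MeasurableSet[F s] {ω | T ω = s} := by
  simpa using hT.measurableSet_eq s

theorem MeasureTheory.IsStoppingTime.stronglyMeasurable_stopped {E : Type*} [AddCommMonoid E]
    [TopologicalSpace E] [ContinuousAdd E] (hT : IsStoppingTime F fun ω => (T ω : WithTop ℕ))
    (hTN : ∀ ω, T ω ≤ N) {G : ℕ → Ω → E} (hG : ∀ s ≤ N, StronglyMeasurable[F N] (G s)) :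
    StronglyMeasurable[F N] fun ω => G (T ω) ω := by
  rw [stopped_eq_sum_indicator G hTN]
  refine Finset.stronglyMeasurable_sum _ fun s hs => ?_
  have hsN := Nat.lt_succ_iff.1 (Finset.mem_range.1 hs)
  exact (hG s hsN).indicator (F.mono hsN _ (hT.measurableSet_eq_nat s))

theorem MeasureTheory.IsStoppingTime.memLp_stopped {E : Type*} [NormedAddCommGroup E]
    {μ : Measure Ω} {p : ENNReal} (hT : IsStoppingTime F fun ω => (T ω : WithTop ℕ))
    (hTN : ∀ ω, T ω ≤ N) {G : ℕ → Ω → E} (hG : ∀ s ≤ N, MemLp (G s) p μ) :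
    MemLp (fun ω => G (T ω) ω) p μ := by
  rw [stopped_eq_sum_indicator G hTN]
  refine memLp_finsetSum' _ fun s hs => ?_
  exact (hG s (Nat.lt_succ_iff.1 (Finset.mem_range.1 hs))).indicator
    (F.le s _ (hT.measurableSet_eq_nat s))

theorem MeasureTheory.IsStoppingTime.stronglyMeasurable_indicator_eq
    (hT : IsStoppingTime F fun ω => (T ω : WithTop ℕ)) {g : Ω → ℝ}
    (hg : StronglyMeasurable[hT.measurableSpace] g) (s : ℕ) :
    StronglyMeasurable[F s] ({ω | T ω = s}.indicator g) := by
  have hiff : ∀ A : Set Ω, MeasurableSet[hT.measurableSpace] ({ω | T ω = s} ∩ A) ↔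
      MeasurableSet[F s] ({ω | T ω = s} ∩ A) := fun A => by
    simpa [Set.inter_comm A] using hT.measurableSet_inter_eq_iff A s
  have hA : MeasurableSet[hT.measurableSpace] {ω | T ω = s} := by
    simpa using (hiff Set.univ).2 (by simpa using hT.measurableSet_eq_nat s)
  exact StronglyMeasurable.stronglyMeasurable_of_measurableSpace_le_on hA (fun A => (hiff A).1)
    (hg.indicator hA) fun ω hω => Set.indicator_of_notMem hω g

end StoppedValues

namespace NLExp

variable {Ω : Type*} {m0 : MeasurableSpace Ω} {μ : Measure Ω} {F : Filtration ℕ m0} {N : ℕ}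
  (EE : NLExp μ F N)

theorem congr_ae {t : ℕ} (ht : t ≤ N) {ξ η : Ω → ℝ}
    (hξm : StronglyMeasurable[F N] ξ) (hξi : MemLp ξ 2 μ)
    (hηm : StronglyMeasurable[F N] η) (hηi : MemLp η 2 μ) (h : ξ =ᵐ[μ] η) :
    EE.E t ξ =ᵐ[μ] EE.E t η :=
  (EE.mono t ht ξ η hξm hξi hηm hηi h.le).antisymm (EE.mono t ht η ξ hηm hηi hξm hξi h.symm.le)

theorem ae_eq_on_of_ae_eq_on {t : ℕ} (ht : t ≤ N) {A : Set Ω} (hA : MeasurableSet[F t] A)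
    {ξ η : Ω → ℝ} (hξm : StronglyMeasurable[F N] ξ) (hξi : MemLp ξ 2 μ)
    (hηm : StronglyMeasurable[F N] η) (hηi : MemLp η 2 μ)
    (h : ∀ᵐ ω ∂μ, ω ∈ A → ξ ω = η ω) :
    ∀ᵐ ω ∂μ, ω ∈ A → EE.E t ξ ω = EE.E t η ω := by
  have hAN : MeasurableSet[F N] A := F.mono ht A hA
  have hglue : A.indicator η + Aᶜ.indicator ξ =ᵐ[μ] ξ := by
    filter_upwards [h] with ω hω
    by_cases hωA : ω ∈ A <;> simp [hωA, hω]
  have hE := EE.congr_ae ht ((hηm.indicator hAN).add (hξm.indicator hAN.compl))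
    ((hηi.indicator (F.le t A hA)).add (hξi.indicator (F.le t A hA).compl)) hξm hξi hglue
  filter_upwards [hE, EE.zeroOne t ht η ξ hηm hηi hξm hξi A hA] with ω hglueE hzo hωA
  rw [← hglueE, hzo]
  simp [hωA]

theorem measure_inter_lt_eq_zero {t : ℕ} (ht : t ≤ N) {B : Set Ω} (hB : MeasurableSet[F t] B)
    {ξ η : Ω → ℝ} (hξm : StronglyMeasurable[F N] ξ) (hξi : MemLp ξ 2 μ)
    (hηm : StronglyMeasurable[F N] η) (hηi : MemLp η 2 μ)
    (hle : ∀ ω ∈ B, ξ ω ≤ η ω) (hE : ∀ᵐ ω ∂μ, ω ∈ B → EE.E t ξ ω = EE.E t η ω) :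
    μ (B ∩ {ω | ξ ω < η ω}) = 0 := by
  have hBN : MeasurableSet[F N] B := F.mono ht B hB
  set ψ := B.indicator η + Bᶜ.indicator ξ
  have hψm : StronglyMeasurable[F N] ψ := (hηm.indicator hBN).add (hξm.indicator hBN.compl)
  have hψi : MemLp ψ 2 μ := (hηi.indicator (F.le t B hB)).add (hξi.indicator (F.le t B hB).compl)
  have hξψ : ξ ≤ᵐ[μ] ψ := .of_forall fun ω => by
    by_cases hω : ω ∈ B <;> simp [ψ, hω, hle]
  have hlt : {ω | ξ ω < ψ ω} = B ∩ {ω | ξ ω < η ω} := by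
    ext ω
    by_cases hω : ω ∈ B <;> simp [ψ, hω]
  have hEψ : EE.E t ψ =ᵐ[μ] EE.E t ξ := by
    filter_upwards [EE.zeroOne t ht η ξ hηm hηi hξm hξi B hB, hE] with ω hzo hω
    by_cases hωB : ω ∈ B <;> simp [ψ, hzo, hωB, hω]
  by_contra hpos
  have hstrict := EE.strictMono t ht ξ ψ hξm hξi hψm hψi hξψ
    (hlt ▸ pos_iff_ne_zero.2 hpos)
  exact hstrict.ne' (measure_mono_null (fun ω hω => ne_of_gt hω) (ae_iff.1 hEψ))

variable {T : Ω → ℕ}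

theorem translation_stopped (hT : IsStoppingTime F fun ω => (T ω : WithTop ℕ))
    (hTN : ∀ ω, T ω ≤ N) {η : Ω → ℝ} (hηm : StronglyMeasurable[F N] η) (hηi : MemLp η 2 μ)
    {G : ℕ → Ω → ℝ} (hG : ∀ s ≤ N, StronglyMeasurable[F s] (G s))
    (hGi : MemLp (fun ω => G (T ω) ω) 2 μ) :
    ∀ᵐ ω ∂μ, EE.E (T ω) (fun ω' => η ω' + G (T ω') ω') ω = EE.E (T ω) η ω + G (T ω) ω := by
  have hGm : StronglyMeasurable[F N] fun ω => G (T ω) ω :=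
    hT.stronglyMeasurable_stopped hTN fun s hs => (hG s hs).mono (F.mono hs)
  refine ae_stopped_of_forall
    (P := fun s ω => EE.E s (fun ω' => η ω' + G (T ω') ω') ω = EE.E s η ω + G s ω) hTN
    fun s hs => ?_
  set A := {ω | T ω = s}
  have hA : MeasurableSet[F s] A := hT.measurableSet_eq_nat s
  have hGA : A.indicator (fun ω => G (T ω) ω) = A.indicator (G s) :=
    Set.indicator_congr fun ω hω => by rw [show T ω = s from hω]
  have hGAm : StronglyMeasurable[F s] (A.indicator fun ω => G (T ω) ω) :=
    hGA ▸ (hG s hs).indicator hA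
  have hlocal := EE.ae_eq_on_of_ae_eq_on hs hA (hηm.add hGm) (hηi.add hGi)
    (hηm.add (hGAm.mono (F.mono hs))) (hηi.add (hGi.indicator (F.le s A hA)))
    (.of_forall fun ω hω => by simp [hω])
  filter_upwards [hlocal, EE.translation s hs η _ hηm hηi hGAm (hGi.indicator (F.le s A hA))]
    with ω hloc htr hωA
  exact (hloc hωA).trans (htr.trans (by simp [A, hωA]))

theorem ae_eval_stopped_eq (hT : IsStoppingTime F fun ω => (T ω : WithTop ℕ))
    (hTN : ∀ ω, T ω ≤ N) {ξ Y : ℕ → Ω → ℝ} (hξm : ∀ s ≤ N, StronglyMeasurable[F N] (ξ s))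
    (hξi : ∀ s ≤ N, MemLp (ξ s) 2 μ) (hY : ∀ s ≤ N, Y s =ᵐ[μ] EE.E s (ξ s)) :
    ∀ᵐ ω ∂μ, EE.E (T ω) (fun ω' => ξ (T ω') ω') ω = Y (T ω) ω := by
  have hξTm : StronglyMeasurable[F N] fun ω => ξ (T ω) ω :=
    hT.stronglyMeasurable_stopped hTN hξm
  have hξTi : MemLp (fun ω => ξ (T ω) ω) 2 μ := hT.memLp_stopped hTN hξi
  refine ae_stopped_of_forall (P := fun s ω => EE.E s (fun ω' => ξ (T ω') ω') ω = Y s ω) hTN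
    fun s hs => ?_
  filter_upwards [EE.ae_eq_on_of_ae_eq_on hs (hT.measurableSet_eq_nat s) hξTm hξTi (hξm s hs)
    (hξi s hs) (.of_forall fun ω (hω : T ω = s) => by rw [hω]), hY s hs] with ω hloc hYs hω
  rw [hloc hω, hYs]

theorem tower_stopped {t : ℕ} (ht : t ≤ N) (hT : IsStoppingTime F fun ω => (T ω : WithTop ℕ))
    (htT : ∀ ω, t ≤ T ω) (hTN : ∀ ω, T ω ≤ N) {Θ : Ω → ℝ} (hΘm : StronglyMeasurable[F N] Θ)
    (hΘi : MemLp Θ 2 μ) :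
    EE.E t (fun ω => EE.E (T ω) Θ ω) =ᵐ[μ] EE.E t Θ := by
  have hEΘm : ∀ s ≤ N, StronglyMeasurable[F N] (EE.E s Θ) :=
    fun s hs => (EE.adapted s hs Θ hΘm hΘi).mono (F.mono hs)
  have hEΘi : ∀ s ≤ N, MemLp (EE.E s Θ) 2 μ := fun s hs => EE.sqInt s hs Θ hΘm hΘi
  obtain ⟨k, hk⟩ := Nat.exists_eq_add_of_le ht
  induction k generalizing t T with
  | zero =>
    have hTt : (fun ω => EE.E (T ω) Θ ω) = EE.E t Θ :=
      funext fun ω => by rw [show T ω = t by linarith [hTN ω, htT ω]]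
    rw [hTt]
    exact EE.tower t t le_rfl ht Θ hΘm hΘi
  | succ k ih =>
    have ht1 : t + 1 ≤ N := by omega
    set A := {ω | T ω = t}
    set T' := fun ω => max (T ω) (t + 1)
    have hT' : IsStoppingTime F fun ω => (T' ω : WithTop ℕ) := hT.max_const (t + 1)
    have hT'N : ∀ ω, T' ω ≤ N := fun ω => max_le (hTN ω) ht1
    have hT'm : StronglyMeasurable[F N] fun ω => EE.E (T' ω) Θ ω :=
      hT'.stronglyMeasurable_stopped hT'N hEΘm
    have hT'i : MemLp (fun ω => EE.E (T' ω) Θ ω) 2 μ :=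
      hT'.memLp_stopped hT'N hEΘi
    have hsplit : (fun ω => EE.E (T ω) Θ ω) =
        A.indicator (EE.E t Θ) + Aᶜ.indicator fun ω => EE.E (T' ω) Θ ω := by
      funext ω
      by_cases hω : T ω = t
      · simp [A, hω]
      · have hT'ω : T' ω = T ω := max_eq_left (Nat.lt_of_le_of_ne (htT ω) (Ne.symm hω))
        simp [A, hω, hT'ω]
    -- `E_t[E_{T'} Θ] = E_t[E_{t+1}[E_{T'} Θ]] = E_t[E_{t+1} Θ] = E_t Θ`
    have hT'tower : EE.E t (fun ω => EE.E (T' ω) Θ ω) =ᵐ[μ] EE.E t Θ :=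
      (EE.tower t (t + 1) t.le_succ ht1 _ hT'm hT'i).symm.trans
        ((EE.congr_ae ht ((EE.adapted _ ht1 _ hT'm hT'i).mono (F.mono ht1))
          (EE.sqInt _ ht1 _ hT'm hT'i) (hEΘm _ ht1) (hEΘi _ ht1)
          (ih ht1 hT' (fun ω => le_max_right _ _) hT'N (by omega))).trans
        (EE.tower t (t + 1) t.le_succ ht1 Θ hΘm hΘi))
    rw [hsplit]
    filter_upwards [EE.zeroOne t ht _ _ (hEΘm t ht) (hEΘi t ht) hT'm hT'i A
      (hT.measurableSet_eq_nat t), EE.tower t t le_rfl ht Θ hΘm hΘi, hT'tower]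
      with ω hzo htt hT'ω
    rw [hzo]
    by_cases hω : ω ∈ A <;> simp [hω, htt, hT'ω]

theorem eval_stopped_add {t : ℕ} (ht : t ≤ N)
    (hT : IsStoppingTime F fun ω => (T ω : WithTop ℕ)) (htT : ∀ ω, t ≤ T ω)
    (hTN : ∀ ω, T ω ≤ N) {ξ Y : ℕ → Ω → ℝ} (hξm : ∀ s ≤ N, StronglyMeasurable[F N] (ξ s))
    (hξi : ∀ s ≤ N, MemLp (ξ s) 2 μ) (hYm : ∀ s ≤ N, StronglyMeasurable[F N] (Y s))
    (hYi : ∀ s ≤ N, MemLp (Y s) 2 μ) (hY : ∀ s ≤ N, Y s =ᵐ[μ] EE.E s (ξ s))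
    {G : ℕ → Ω → ℝ} (hG : ∀ s ≤ N, StronglyMeasurable[F s] (G s))
    (hGi : MemLp (fun ω => G (T ω) ω) 2 μ) :
    EE.E t (fun ω => ξ (T ω) ω + G (T ω) ω) =ᵐ[μ] EE.E t (fun ω => Y (T ω) ω + G (T ω) ω) := by
  have hGm : StronglyMeasurable[F N] fun ω => G (T ω) ω :=
    hT.stronglyMeasurable_stopped hTN fun s hs => (hG s hs).mono (F.mono hs)
  have hξTm : StronglyMeasurable[F N] fun ω => ξ (T ω) ω :=
    hT.stronglyMeasurable_stopped hTN hξm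
  have hξTi : MemLp (fun ω => ξ (T ω) ω) 2 μ := hT.memLp_stopped hTN hξi
  set Θ := fun ω => ξ (T ω) ω + G (T ω) ω
  have hΘm : StronglyMeasurable[F N] Θ := hξTm.add hGm
  have hΘi : MemLp Θ 2 μ := hξTi.add hGi
  have hEΘ : (fun ω => EE.E (T ω) Θ ω) =ᵐ[μ] fun ω => Y (T ω) ω + G (T ω) ω := by
    filter_upwards [EE.translation_stopped hT hTN hξTm hξTi hG hGi,
      EE.ae_eval_stopped_eq hT hTN hξm hξi hY] with ω htr hev
    rw [← hev, ← htr]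
  refine (EE.tower_stopped ht hT htT hTN hΘm hΘi).symm.trans (EE.congr_ae ht ?_ ?_
    ((hT.stronglyMeasurable_stopped hTN hYm).add hGm)
    ((hT.memLp_stopped hTN hYi).add hGi) hEΘ)
  · exact hT.stronglyMeasurable_stopped hTN fun s hs =>
      (EE.adapted s hs Θ hΘm hΘi).mono (F.mono hs)
  · exact hT.memLp_stopped hTN fun s hs => EE.sqInt s hs Θ hΘm hΘi

theorem eval_restart_eq_on {t : ℕ} (ht : t ≤ N) {B : Set Ω} (hB : MeasurableSet[F t] B)
    {σ τ : Ω → ℕ} (hBσ : ∀ ω ∈ B, σ ω = t) (hτ : IsStoppingTime F fun ω => (τ ω : WithTop ℕ))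
    (hτN : ∀ ω, τ ω ≤ N) (hT : IsStoppingTime F fun ω => (T ω : WithTop ℕ))
    (htT : ∀ ω, t ≤ T ω) (hTN : ∀ ω, T ω ≤ N) (hBT : ∀ᵐ ω ∂μ, ω ∈ B → T ω = τ ω)
    {ξ Y : ℕ → Ω → ℝ} (hξm : ∀ s ≤ N, StronglyMeasurable[F N] (ξ s))
    (hξi : ∀ s ≤ N, MemLp (ξ s) 2 μ) (hYm : ∀ s ≤ N, StronglyMeasurable[F N] (Y s))
    (hYi : ∀ s ≤ N, MemLp (Y s) 2 μ) (hY : ∀ s ≤ N, Y s =ᵐ[μ] EE.E s (ξ s))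
    {G : ℕ → Ω → ℝ} (hG : ∀ s ≤ N, StronglyMeasurable[F s] (G s))
    (hGi : MemLp (fun ω => G (T ω) ω) 2 μ) {Λ : Ω → ℝ} (hΛm : StronglyMeasurable[F N] Λ)
    (hΛi : MemLp Λ 2 μ) (hBG : ∀ᵐ ω ∂μ, ω ∈ B → G (T ω) ω = Λ ω)
    (hrep : (fun ω => Y (σ ω) ω) =ᵐ[μ]
      fun ω => EE.E (σ ω) (fun ω' => Λ ω' + Y (τ ω') ω') ω) :
    ∀ᵐ ω ∂μ, ω ∈ B → EE.E t (fun ω => ξ (T ω) ω + G (T ω) ω) ω = Y t ω := by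
  have hGm : StronglyMeasurable[F N] fun ω => G (T ω) ω :=
    hT.stronglyMeasurable_stopped hTN fun s hs => (hG s hs).mono (F.mono hs)
  have hBeq : ∀ᵐ ω ∂μ, ω ∈ B → Y (T ω) ω + G (T ω) ω = Λ ω + Y (τ ω) ω := by
    filter_upwards [hBT, hBG] with ω hTω hGω hωB
    rw [hGω hωB, hTω hωB, add_comm]
  have hlocal := EE.ae_eq_on_of_ae_eq_on ht hB
    ((hT.stronglyMeasurable_stopped hTN hYm).add hGm) ((hT.memLp_stopped hTN hYi).add hGi)
    (hΛm.add (hτ.stronglyMeasurable_stopped hτN hYm)) (hΛi.add (hτ.memLp_stopped hτN hYi)) hBeq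
  filter_upwards [EE.eval_stopped_add ht hT htT hTN hξm hξi hYm hYi hY hG hGi, hlocal, hrep]
    with ω hadd hloc hrepω hωB
  rw [hadd]
  rw [hBσ ω hωB] at hrepω
  exact (hloc hωB).trans hrepω.symm

end NLExp

noncomputable def repSum {Ω : Type*} (f : Ω → ℕ → ℝ → ℝ) (L : ℕ → Ω → ℝ) (N t : ℕ) (ω : Ω) :
    ℝ :=
  ∑ u ∈ Finset.Icc t N, f ω u (runMax L t u ω)

section Representation

variable {Ω : Type*} {m0 : MeasurableSpace Ω} {F : Filtration ℕ m0} {N : ℕ}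
  {f : Ω → ℕ → ℝ → ℝ} {L : ℕ → Ω → ℝ}

theorem repSum_lt_repSum_add_sum (hf_anti : ∀ ω, ∀ t ≤ N, StrictAnti (f ω t)) {ω : Ω}
    {t T : ℕ} {l : ℝ} (htT : t < T) (hTN : T ≤ N) (hl : l < L t ω) :
    repSum f L N t ω < repSum f L N T ω + ∑ u ∈ Finset.Ico t T, f ω u l := by
  have hsplit : repSum f L N t ω = ∑ u ∈ Finset.Ico t T, f ω u (runMax L t u ω) +
      ∑ u ∈ Finset.Icc T N, f ω u (runMax L t u ω) := by
    simp only [repSum, ← Finset.Ico_add_one_right_eq_Icc]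
    exact (Finset.sum_Ico_consecutive _ htT.le (by omega)).symm
  have hhead : ∑ u ∈ Finset.Ico t T, f ω u (runMax L t u ω) < ∑ u ∈ Finset.Ico t T, f ω u l :=
    Finset.sum_lt_sum_of_nonempty ⟨t, Finset.mem_Ico.2 ⟨le_rfl, htT⟩⟩ fun u hu =>
      hf_anti ω u (by have := (Finset.mem_Ico.1 hu).2; omega)
        (hl.trans_le (le_runMax le_rfl (Finset.mem_Ico.1 hu).1 ω))
  have htail : ∑ u ∈ Finset.Icc T N, f ω u (runMax L t u ω) ≤ repSum f L N T ω :=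
    Finset.sum_le_sum fun u hu => (hf_anti ω u (Finset.mem_Icc.1 hu).2).antitone
      (runMax_le_runMax htT.le (Finset.mem_Icc.1 hu).1 ω)
  linarith

theorem stronglyMeasurable_comp_adapted (hf_cont : ∀ ω, ∀ t ≤ N, Continuous (f ω t))
    (hf_adapted : ∀ t ≤ N, ∀ l : ℝ, StronglyMeasurable[F t] fun ω => f ω t l)
    {u s : ℕ} (hus : u ≤ s) (huN : u ≤ N) {g : Ω → ℝ}
    (hg : Measurable[F s] g) : StronglyMeasurable[F s] fun ω => f ω u (g ω) :=
  stronglyMeasurable_comp_of_caratheodory (fun r => (hf_adapted u huN r).mono (F.mono hus))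
    (fun ω => hf_cont ω u huN) hg

theorem stronglyMeasurable_repSum (hf_cont : ∀ ω, ∀ t ≤ N, Continuous (f ω t))
    (hf_adapted : ∀ t ≤ N, ∀ l : ℝ, StronglyMeasurable[F t] fun ω => f ω t l)
    (hL : ∀ t ≤ N, StronglyMeasurable[F t] (L t)) (s : ℕ) :
    StronglyMeasurable[F N] (repSum f L N s) :=
  Finset.stronglyMeasurable_fun_sum _ fun _ hu =>
    have huN := (Finset.mem_Icc.1 hu).2
    stronglyMeasurable_comp_adapted hf_cont hf_adapted huN huN
      (measurable_runMax
        (fun v hv => ((hL v (hv.trans huN)).mono (F.mono (hv.trans huN))).measurable)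
        (Finset.mem_Icc.1 hu).1)

theorem stronglyMeasurable_sum_Ico_stopped (hf_cont : ∀ ω, ∀ t ≤ N, Continuous (f ω t))
    (hf_adapted : ∀ t ≤ N, ∀ l : ℝ, StronglyMeasurable[F t] fun ω => f ω t l)
    {σ τ : Ω → ℕ}
    (hσ : IsStoppingTime F fun ω => (σ ω : WithTop ℕ)) (hσN : ∀ ω, σ ω ≤ N)
    (hτ : IsStoppingTime F fun ω => (τ ω : WithTop ℕ)) (hτN : ∀ ω, τ ω ≤ N) {l : Ω → ℝ}
    (hl : Measurable[F N] l) :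
    StronglyMeasurable[F N] fun ω => ∑ u ∈ Finset.Ico (σ ω) (τ ω), f ω u (l ω) :=
  hσ.stronglyMeasurable_stopped (G := fun a ω => ∑ u ∈ Finset.Ico a (τ ω), f ω u (l ω)) hσN
    fun a _ => hτ.stronglyMeasurable_stopped (G := fun b ω => ∑ u ∈ Finset.Ico a b, f ω u (l ω))
      hτN fun _ hb =>
      Finset.stronglyMeasurable_fun_sum _ fun u hu =>
        have hub : u ≤ N := ((Finset.mem_Ico.1 hu).2.trans_le hb).le
        stronglyMeasurable_comp_adapted hf_cont hf_adapted hub hub hl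

theorem stronglyMeasurable_sum_Ico_indicator (hf_cont : ∀ ω, ∀ t ≤ N, Continuous (f ω t))
    (hf_adapted : ∀ t ≤ N, ∀ l : ℝ, StronglyMeasurable[F t] fun ω => f ω t l)
    {t s : ℕ} (hsN : s ≤ N) {B : Set Ω} (hB : MeasurableSet[F t] B) {g : Ω → ℝ}
    (hg : Measurable[F t] g) :
    StronglyMeasurable[F s] fun ω => ∑ u ∈ Finset.Ico t s, B.indicator (fun ω => f ω u (g ω)) ω :=
  Finset.stronglyMeasurable_fun_sum _ fun _ hu =>
    have ⟨htu, hus⟩ := Finset.mem_Ico.1 hu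
    ((stronglyMeasurable_comp_adapted hf_cont hf_adapted le_rfl (hus.le.trans hsN)
      (hg.mono (F.mono htu) le_rfl)).indicator (F.mono htu _ hB)).mono (F.mono hus.le)

theorem measure_eq_zero_of_lt_on {μ : Measure Ω} (EE : NLExp μ F N)
    (hf_cont : ∀ ω, ∀ t ≤ N, Continuous (f ω t)) (hf_anti : ∀ ω, ∀ t ≤ N, StrictAnti (f ω t))
    (hf_adapted : ∀ t ≤ N, ∀ l : ℝ, StronglyMeasurable[F t] fun ω => f ω t l)
    {X : ℕ → Ω → ℝ} (hX_adapted : ∀ t ≤ N, StronglyMeasurable[F t] (X t))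
    (hX_sqInt : ∀ t ≤ N, MemLp (X t) 2 μ)
    (hL_adapted : ∀ t ≤ N, StronglyMeasurable[F t] (L t))
    (hL_sqInt : ∀ t ≤ N, MemLp (repSum f L N t) 2 μ)
    (hL_rep : ∀ t ≤ N, X t =ᵐ[μ] EE.E t (repSum f L N t))
    {σ τ : Ω → ℕ} (hσ : IsStoppingTime F fun ω => (σ ω : WithTop ℕ)) (hσ_le : ∀ ω, σ ω ≤ N)
    (hτ : IsStoppingTime F fun ω => (τ ω : WithTop ℕ)) (hτ_le : ∀ ω, τ ω ≤ N)
    (hστ : ∀ᵐ ω ∂μ, σ ω < N → σ ω < τ ω) {l : Ω → ℝ} (hl : Measurable[F N] l)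
    (hl_sqInt : MemLp (fun ω => ∑ u ∈ Finset.Ico (σ ω) (τ ω), f ω u (l ω)) 2 μ)
    (hl_rep : (fun ω => X (σ ω) ω) =ᵐ[μ] fun ω => EE.E (σ ω)
      (fun ω' => (∑ u ∈ Finset.Ico (σ ω') (τ ω'), f ω' u (l ω')) + X (τ ω') ω') ω)
    {t : ℕ} (ht : t < N) {B : Set Ω} (hB : MeasurableSet[F t] B) (hBσ : ∀ ω ∈ B, σ ω = t)
    {g : Ω → ℝ} (hg : Measurable[F t] g) (hBg : ∀ ω ∈ B, g ω = l ω)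
    (hBL : ∀ ω ∈ B, g ω < L t ω) :
    μ B = 0 := by
  -- restart at `T = τ` on `B`, pushed past `t` elsewhere so that `T` is a stopping time `> t`
  set T := fun ω => max (τ ω) (t + 1)
  have hT : IsStoppingTime F fun ω => (T ω : WithTop ℕ) := hτ.max_const (t + 1)
  have htT : ∀ ω, t < T ω := fun ω => t.lt_succ_self.trans_le (le_max_right _ _)
  have hTN : ∀ ω, T ω ≤ N := fun ω => max_le (hτ_le ω) ht
  have hBT : ∀ᵐ ω ∂μ, ω ∈ B → T ω = τ ω := by
    filter_upwards [hστ] with ω hω hωB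
    exact max_eq_left (hBσ ω hωB ▸ hω (hBσ ω hωB ▸ ht))
  set G := fun s ω => ∑ u ∈ Finset.Ico t s, B.indicator (fun ω => f ω u (g ω)) ω
  set Λ := fun ω => ∑ u ∈ Finset.Ico (σ ω) (τ ω), f ω u (l ω)
  have hGB : ∀ s ω, G s ω = B.indicator (fun ω => ∑ u ∈ Finset.Ico t s, f ω u (l ω)) ω := by
    intro s ω
    by_cases hωB : ω ∈ B <;> simp [G, hωB, hBg]
  have hGT : (fun ω => G (T ω) ω) =ᵐ[μ] B.indicator Λ := by
    filter_upwards [hBT] with ω hω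
    by_cases hωB : ω ∈ B
    · simp [hGB, Λ, hωB, hω hωB, hBσ ω hωB]
    · simp [hGB, hωB]
  have hξm := stronglyMeasurable_repSum hf_cont hf_adapted hL_adapted
  have hG : ∀ s ≤ N, StronglyMeasurable[F s] (G s) := fun s hs =>
    stronglyMeasurable_sum_Ico_indicator hf_cont hf_adapted hs hB hg
  have hGi : MemLp (fun ω => G (T ω) ω) 2 μ := (hl_sqInt.indicator (F.le t B hB)).ae_eq hGT.symm
  have hE := EE.eval_restart_eq_on ht.le hB hBσ hτ hτ_le hT (fun ω => (htT ω).le)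
    hTN hBT (fun s _ => hξm s) hL_sqInt (fun s hs => (hX_adapted s hs).mono (F.mono hs))
    hX_sqInt hL_rep hG hGi
    (stronglyMeasurable_sum_Ico_stopped hf_cont hf_adapted hσ hσ_le hτ hτ_le hl) hl_sqInt
    (by filter_upwards [hGT] with ω hω hωB; rw [hω, Set.indicator_of_mem hωB]) hl_rep
  have hlt_restart : ∀ ω ∈ B, repSum f L N t ω < repSum f L N (T ω) ω + G (T ω) ω :=
    fun ω hωB => by
      simpa [hGB, hωB, hBg ω hωB] using
        repSum_lt_repSum_add_sum hf_anti (htT ω) (hTN ω) (hBL ω hωB)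
  have hnull := EE.measure_inter_lt_eq_zero ht.le hB
    (η := fun ω => repSum f L N (T ω) ω + G (T ω) ω) (hξm t) (hL_sqInt t ht.le)
    ((hT.stronglyMeasurable_stopped hTN fun s _ => hξm s).add
      (hT.stronglyMeasurable_stopped hTN fun s hs => (hG s hs).mono (F.mono hs)))
    ((hT.memLp_stopped hTN hL_sqInt).add hGi) (fun ω hω => (hlt_restart ω hω).le)
    (by filter_upwards [hE, hL_rep t ht.le] with ω hEω hXω hωB; rw [← hXω, hEω hωB])
  exact measure_mono_null (fun ω hω => Set.mem_inter hω (hlt_restart ω hω)) hnull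

theorem ae_le_of_stoppingTime_eq {μ : Measure Ω} (EE : NLExp μ F N)
    (hf_cont : ∀ ω, ∀ t ≤ N, Continuous (f ω t)) (hf_anti : ∀ ω, ∀ t ≤ N, StrictAnti (f ω t))
    (hf_adapted : ∀ t ≤ N, ∀ l : ℝ, StronglyMeasurable[F t] fun ω => f ω t l)
    {X : ℕ → Ω → ℝ} (hX_adapted : ∀ t ≤ N, StronglyMeasurable[F t] (X t))
    (hX_sqInt : ∀ t ≤ N, MemLp (X t) 2 μ)
    (hL_adapted : ∀ t ≤ N, StronglyMeasurable[F t] (L t))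
    (hL_sqInt : ∀ t ≤ N, MemLp (repSum f L N t) 2 μ)
    (hL_rep : ∀ t ≤ N, X t =ᵐ[μ] EE.E t (repSum f L N t))
    {σ τ : Ω → ℕ} (hσ : IsStoppingTime F fun ω => (σ ω : WithTop ℕ)) (hσ_le : ∀ ω, σ ω ≤ N)
    (hτ : IsStoppingTime F fun ω => (τ ω : WithTop ℕ)) (hτ_le : ∀ ω, τ ω ≤ N)
    (hστ : ∀ᵐ ω ∂μ, σ ω < N → σ ω < τ ω)
    {l : Ω → ℝ} (hl_meas : StronglyMeasurable[hσ.measurableSpace] l)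
    (hl_sqInt : MemLp (fun ω => ∑ u ∈ Finset.Ico (σ ω) (τ ω), f ω u (l ω)) 2 μ)
    (hl_rep : (fun ω => X (σ ω) ω) =ᵐ[μ] fun ω => EE.E (σ ω)
      (fun ω' => (∑ u ∈ Finset.Ico (σ ω') (τ ω'), f ω' u (l ω')) + X (τ ω') ω') ω)
    {t : ℕ} (ht : t < N) :
    ∀ᵐ ω ∂μ, σ ω = t → L t ω ≤ l ω := by
  set l' := {ω | σ ω = t}.indicator l
  have hl' : StronglyMeasurable[F t] l' := hσ.stronglyMeasurable_indicator_eq hl_meas t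
  have hlN : Measurable[F N] l := (hl_meas.mono (hσ.measurableSpace_le_of_le_const
    fun ω => WithTop.coe_le_coe.2 (hσ_le ω))).measurable
  have hμB := measure_eq_zero_of_lt_on EE hf_cont hf_anti hf_adapted hX_adapted hX_sqInt
    hL_adapted hL_sqInt hL_rep hσ hσ_le hτ hτ_le hστ hlN hl_sqInt hl_rep ht
    ((hσ.measurableSet_eq_nat t).inter
      (measurableSet_lt hl'.measurable (hL_adapted t ht.le).measurable))
    (fun ω hω => hω.1) hl'.measurable (fun ω hω => Set.indicator_of_mem hω.1 l) (fun ω hω => hω.2)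
  filter_upwards [measure_eq_zero_iff_ae_notMem.1 hμB] with ω hω hσω
  by_contra hLl
  exact hω ⟨hσω, by simpa [l', hσω] using not_le.1 hLl⟩

end Representation

theorem representation_solution_lower_bound_general
{Ω : Type*}
    [m0 : MeasurableSpace Ω]
    (μ : Measure Ω)
    (F : Filtration ℕ m0) (N : ℕ)
    (EE : NLExp μ F N)
(f : Ω → ℕ → ℝ → ℝ)
    (hf_cont : ∀ ω, ∀ t, t ≤ N → Continuous (f ω t))
    (hf_anti : ∀ ω, ∀ t, t ≤ N → StrictAnti (f ω t))
    (hf_adapted : ∀ t, t ≤ N → ∀ l : ℝ, StronglyMeasurable[F t] fun ω => f ω t l)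
(X : ℕ → Ω → ℝ)
    (hX_adapted : ∀ t, t ≤ N → StronglyMeasurable[F t] (X t))
    (hX_sqInt : ∀ t, t ≤ N → MemLp (X t) 2 μ)
(L : ℕ → Ω → ℝ)
    (hL_adapted : ∀ t, t ≤ N → StronglyMeasurable[F t] (L t))
    (hL_sqInt : ∀ t, t ≤ N →
      MemLp (fun ω => ∑ u ∈ Finset.Icc t N, f ω u (runMax L t u ω)) 2 μ)
    (hL_rep : ∀ t, t ≤ N →
      X t =ᵐ[μ] EE.E t fun ω => ∑ u ∈ Finset.Icc t N, f ω u (runMax L t u ω))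
    (σ : Ω → ℕ) (hσ : IsStoppingTime F (fun ω => (σ ω : WithTop ℕ))) (hσ_le : ∀ ω, σ ω ≤ N)
    (hσ_lt : ∀ᵐ ω ∂μ, σ ω < N)
    (τ : Ω → ℕ) (hτ : IsStoppingTime F (fun ω => (τ ω : WithTop ℕ))) (hτ_le : ∀ ω, τ ω ≤ N)
    (hστ : ∀ᵐ ω ∂μ, σ ω < N → σ ω < τ ω)
    (l : Ω → ℝ) (hl_meas : StronglyMeasurable[hσ.measurableSpace] l)
    (hl_sqInt : MemLp (fun ω => ∑ u ∈ Finset.Ico (σ ω) (τ ω), f ω u (l ω)) 2 μ)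
    (hl_rep : (fun ω => X (σ ω) ω) =ᵐ[μ] fun ω => EE.E (σ ω)
      (fun ω' => (∑ u ∈ Finset.Ico (σ ω') (τ ω'), f ω' u (l ω')) + X (τ ω') ω') ω) :
    ∀ᵐ ω ∂μ, L (σ ω) ω ≤ l ω := by
  have hlevel : ∀ s ≤ N, ∀ᵐ ω ∂μ, σ ω = s → s < N → L s ω ≤ l ω := fun s _ =>
    (em (s < N)).elim
      (fun hs => (ae_le_of_stoppingTime_eq EE hf_cont hf_anti hf_adapted hX_adapted hX_sqInt
        hL_adapted hL_sqInt hL_rep hσ hσ_le hτ hτ_le hστ hl_meas hl_sqInt hl_rep hs).mono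
          fun _ h hσω _ => h hσω)
      (fun hs => .of_forall fun _ _ h => absurd h hs)
  filter_upwards [ae_stopped_of_forall (P := fun s ω => s < N → L s ω ≤ l ω) hσ_le hlevel,
    hσ_lt] with ω h hω using h hω

/-- **Lower bound property of the representation solution.** If `L` solves the
stochastic representation problem for `X`, then for every stopping time
`σ ∈ T_{0,N-1}` and every `τ ∈ T_σ`, one has `L_σ ≤ l_{σ,τ}` a.s., where `l_{σ,τ}`
is the (a.s. unique) `F_σ`-measurable solution of
`X_σ = E_σ[∑_{u=σ}^{τ-1} f(u, l_{σ,τ}) + X_τ]`. -/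
theorem representation_solution_lower_bound
{Ω : Type*} [TopologicalSpace Ω] [PolishSpace Ω]
    [m0 : MeasurableSpace Ω] [BorelSpace Ω]
    (μ : Measure Ω) [IsProbabilityMeasure μ]
    (F : Filtration ℕ m0) (N : ℕ) (hN : 1 ≤ N)
    (EE : NLExp μ F N)
(f : Ω → ℕ → ℝ → ℝ)
    (hf_cont : ∀ ω, ∀ t, t ≤ N → Continuous (f ω t))
    (hf_anti : ∀ ω, ∀ t, t ≤ N → StrictAnti (f ω t))
    (hf_top : ∀ ω, ∀ t, t ≤ N → Tendsto (f ω t) atBot atTop)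
    (hf_bot : ∀ ω, ∀ t, t ≤ N → Tendsto (f ω t) atTop atBot)
    (hf_adapted : ∀ t, t ≤ N → ∀ l : ℝ, StronglyMeasurable[F t] fun ω => f ω t l)
    (hf_sqInt : ∀ t, t ≤ N → ∀ l : ℝ, MemLp (fun ω => f ω t l) 2 μ)
(X : ℕ → Ω → ℝ)
    (hX_adapted : ∀ t, t ≤ N → StronglyMeasurable[F t] (X t))
    (hX_sqInt : ∀ t, t ≤ N → MemLp (X t) 2 μ)
(L : ℕ → Ω → ℝ)
    (hL_adapted : ∀ t, t ≤ N → StronglyMeasurable[F t] (L t))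
    (hL_sqInt : ∀ t, t ≤ N →
      MemLp (fun ω => ∑ u ∈ Finset.Icc t N, f ω u (runMax L t u ω)) 2 μ)
    (hL_rep : ∀ t, t ≤ N →
      X t =ᵐ[μ] EE.E t fun ω => ∑ u ∈ Finset.Icc t N, f ω u (runMax L t u ω))
    (σ : Ω → ℕ) (hσ : IsStoppingTime F (fun ω => (σ ω : WithTop ℕ))) (hσ_le : ∀ ω, σ ω ≤ N)
    (hσ_lt : ∀ᵐ ω ∂μ, σ ω < N)
    (τ : Ω → ℕ) (hτ : IsStoppingTime F (fun ω => (τ ω : WithTop ℕ))) (hτ_le : ∀ ω, τ ω ≤ N)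
    (hστ : ∀ᵐ ω ∂μ, σ ω < N → σ ω < τ ω)
    (l : Ω → ℝ) (hl_meas : StronglyMeasurable[hσ.measurableSpace] l)
    (hl_sqInt : MemLp (fun ω => ∑ u ∈ Finset.Ico (σ ω) (τ ω), f ω u (l ω)) 2 μ)
    (hl_rep : (fun ω => X (σ ω) ω) =ᵐ[μ] fun ω => EE.E (σ ω)
      (fun ω' => (∑ u ∈ Finset.Ico (σ ω') (τ ω'), f ω' u (l ω')) + X (τ ω') ω') ω) :
    ∀ᵐ ω ∂μ, L (σ ω) ω ≤ l ω :=
  representation_solution_lower_bound_general (m0 := m0) μ F N EE f hf_cont hf_anti hf_adapted X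
    hX_adapted hX_sqInt L hL_adapted hL_sqInt hL_rep σ hσ hσ_le hσ_lt τ hτ hτ_le hστ l hl_meas
    hl_sqInt hl_rep
end
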